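/- arXiv:1806.05515 — 7 statements merged into one kernel-verified Lean document; each statement's English description precedes it below -/
import Mathlib

section
/- For every integer n ≥ 1, the denominator of the rational number Ê_{2n} (written in lowest terms with positive denominator) equals the product of all odd primes p such that (p−1) divides 2n. In particular, (∏_{p odd prime, (p−1)∣2n} p) · Ê_{2n} is an integer. -/
/-!
By von Staudt–Clausen, `B_{2n} = z - ∑ 1/p` with `z ∈ ℤ`, the sum running over the primes `p`
with `(p - 1) ∣ 2n`. Multiplying by `2 - 2^{2n}` turns the term `1/2` into an integer, and for odd
such `p` Fermat's little theorem gives `2^{2n} ≡ 1 [ZMOD p]`, so `(2 - 2^{2n})/p ≡ 1/p` modulo `ℤ`.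
Hence `Ê_{2n} = Z - ∑_{p odd} 1/p`, and the reciprocals of distinct primes have pairwise coprime
denominators, which multiply in the sum.
-/

/-- Euler numbers of the second kind: `Ê n = (2 - 2^n) * B n` with `B 1 = -1/2`. -/
def eulerSecond (n : ℕ) : ℚ := (2 - 2 ^ n) * bernoulli n

open Finset

namespace Rat

theorem den_add_of_coprime {q r : ℚ} (h : q.den.Coprime r.den) :
    (q + r).den = q.den * r.den := by
  have hq : q.den ∣ (q + r).den :=
    h.dvd_of_dvd_mul_right (by simpa using sub_den_dvd (q + r) r)
  have hr : r.den ∣ (q + r).den :=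
    h.symm.dvd_of_dvd_mul_left (by simpa [mul_comm] using sub_den_dvd (q + r) q)
  exact Nat.dvd_antisymm (add_den_dvd q r) (h.mul_dvd_of_dvd_of_dvd hq hr)

theorem den_sum_of_pairwise_coprime {ι : Type*} [DecidableEq ι] (s : Finset ι) (f : ι → ℚ)
    (h : (s : Set ι).Pairwise fun i j => (f i).den.Coprime (f j).den) :
    (∑ i ∈ s, f i).den = ∏ i ∈ s, (f i).den := by
  induction s using Finset.induction with
  | empty => simp
  | insert a s ha ih =>
    rw [coe_insert, Set.pairwise_insert_of_notMem (mod_cast ha)] at h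
    have hcop : (f a).den.Coprime (∑ i ∈ s, f i).den :=
      ih h.1 ▸ Nat.Coprime.prod_right fun i hi => (h.2 i hi).1
    rw [sum_insert ha, prod_insert ha, den_add_of_coprime hcop, ih h.1]

end Rat

theorem den_sum_one_div_primes {P : Finset ℕ} (hP : ∀ p ∈ P, p.Prime) :
    (∑ p ∈ P, (1 : ℚ) / p).den = ∏ p ∈ P, p := by
  have hden : ∀ p ∈ P, ((1 : ℚ) / p).den = p := fun p hp => by
    simp [(hP p hp).ne_zero]
  rw [Rat.den_sum_of_pairwise_coprime, prod_congr rfl hden]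
  intro p hp q hq hpq
  rw [hden p hp, hden q hq]
  exact (Nat.coprime_primes (hP p hp) (hP q hq)).2 hpq

theorem Int.prime_dvd_pow_sub_one_of_sub_one_dvd {p m : ℕ} (hp : p.Prime) {a : ℤ}
    (ha : IsCoprime a p) (hm : p - 1 ∣ m) : (p : ℤ) ∣ a ^ m - 1 := by
  obtain ⟨c, rfl⟩ := hm
  simpa [pow_mul] using ((Int.ModEq.pow_card_sub_one_eq_one hp ha).pow c).symm.dvd

theorem filter_prime_sub_one_dvd_eq_insert_two {n : ℕ} (hn : 0 < n) :
    ((range (2 * n + 2)).filter fun p => p.Prime ∧ (p - 1) ∣ 2 * n) =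
      insert 2 ((range (2 * n + 2)).filter fun p => p.Prime ∧ Odd p ∧ (p - 1) ∣ 2 * n) := by
  ext p
  simp only [mem_filter, mem_range, mem_insert]
  constructor
  · rintro ⟨hlt, hp, hdvd⟩
    exact hp.eq_two_or_odd'.imp_right fun hodd => ⟨hlt, hp, hodd, hdvd⟩
  · rintro (rfl | ⟨hlt, hp, -, hdvd⟩)
    · exact ⟨by omega, Nat.prime_two, by simp⟩
    · exact ⟨hlt, hp, hdvd⟩

theorem eulerSecond_two_mul_add_sum_mem_range_intCast {n : ℕ} (hn : 0 < n) :
    eulerSecond (2 * n) + ∑ p ∈ range (2 * n + 2) with p.Prime ∧ Odd p ∧ (p - 1) ∣ 2 * n,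
      (1 : ℚ) / p ∈ Set.range Int.cast := by
  set P := (range (2 * n + 2)).filter fun p => p.Prime ∧ Odd p ∧ (p - 1) ∣ 2 * n
  obtain ⟨z, hz⟩ := Bernoulli.vonStaudt_clausen n
  rw [filter_prime_sub_one_dvd_eq_insert_two hn, sum_insert (by simp), Nat.cast_ofNat] at hz
  have hdvd : ∀ p ∈ P, (p : ℤ) ∣ 2 ^ (2 * n) - 1 := by
    intro p hp
    obtain ⟨-, hp, hodd, hdvd⟩ := mem_filter.1 hp
    have hp2 : p ≠ 2 := by
      rintro rfl
      exact Nat.not_odd_iff_even.2 even_two hodd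
    exact Int.prime_dvd_pow_sub_one_of_sub_one_dvd hp
      (Nat.isCoprime_iff_coprime.2 ((Nat.coprime_primes Nat.prime_two hp).2 hp2.symm)) hdvd
  have hsum : ∑ p ∈ P, (((2 ^ (2 * n) - 1) / (p : ℤ) : ℤ) : ℚ) =
      (2 ^ (2 * n) - 1) * ∑ p ∈ P, (1 : ℚ) / p := by
    rw [mul_sum]
    refine sum_congr rfl fun p hp => ?_
    rw [Int.cast_div (hdvd p hp) (by simpa using (mem_filter.1 hp).2.1.ne_zero)]
    push_cast
    ring
  have hpow : (2 : ℚ) ^ (2 * n) = 2 * 2 ^ (2 * n - 1) := by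
    rw [← pow_succ']
    congr 1
    omega
  refine ⟨(2 - 2 ^ (2 * n)) * z - (1 - 2 ^ (2 * n - 1)) +
    ∑ p ∈ P, (2 ^ (2 * n) - 1) / (p : ℤ), ?_⟩
  push_cast
  rw [hsum, eulerSecond]
  linear_combination (2 - 2 ^ (2 * n)) * hz - hpow / 2

theorem denominator_eulerSecond (n : ℕ) (hn : 1 ≤ n) :
    (eulerSecond (2 * n)).den =
      ∏ p ∈ Finset.filter (fun p => Nat.Prime p ∧ Odd p ∧ (p - 1) ∣ 2 * n)
        (Finset.range (2 * n + 2)), p ∧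
    ∃ z : ℤ,
      ((∏ p ∈ Finset.filter (fun p => Nat.Prime p ∧ Odd p ∧ (p - 1) ∣ 2 * n)
        (Finset.range (2 * n + 2)), p : ℕ) : ℚ) * eulerSecond (2 * n) = (z : ℚ) := by
  obtain ⟨z, hz⟩ := eulerSecond_two_mul_add_sum_mem_range_intCast hn
  have hden : (eulerSecond (2 * n)).den = ∏ p ∈ range (2 * n + 2) with
      p.Prime ∧ Odd p ∧ (p - 1) ∣ 2 * n, p := by
    rw [← den_sum_one_div_primes fun p hp => (mem_filter.1 hp).2.1, eq_sub_of_add_eq hz.symm,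
      Rat.intCast_sub_den]
  exact ⟨hden, _, hden ▸ Rat.den_mul_eq_num _⟩
end

section
/- For every positive integer n and every nonnegative integer k, ∑_{j=0}^{n} C(2n+1, 2j) · (2k+1)^{2n−2j+1} · Ê_{2j} = 2(2n+1) · ∑_{l=1}^{k} (2l)^{2n}. -/
open Finset

theorem Finset.sum_range_two_mul {M : Type*} [AddCommMonoid M] (f : ℕ → M) (N : ℕ) :
    ∑ i ∈ range (2 * N), f i = ∑ j ∈ range N, (f (2 * j) + f (2 * j + 1)) := by
  induction N with
  | zero => simp
  | succ N ih => rw [Nat.mul_succ, sum_range_succ, sum_range_succ, ih, sum_range_succ, add_assoc]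

theorem eulerSecond_eq_zero_of_odd {n : ℕ} (h : Odd n) : eulerSecond n = 0 := by
  obtain rfl | hn := eq_or_ne n 1
  · norm_num [eulerSecond]
  · rw [eulerSecond, bernoulli_eq_zero_of_odd h (by grind), mul_zero]

namespace Polynomial

noncomputable def eulerSecond (n : ℕ) : ℚ[X] :=
  ∑ i ∈ range (n + 1), monomial (n - i) (_root_.eulerSecond i * n.choose i)

theorem eulerSecond_eval (n : ℕ) (x : ℚ) :
    (eulerSecond n).eval x =
      ∑ i ∈ range (n + 1), (n.choose i : ℚ) * _root_.eulerSecond i * x ^ (n - i) := by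
  simp only [eulerSecond, eval_finsetSum, eval_monomial]
  exact sum_congr rfl fun i _ => by ring

theorem bernoulli_eval (n : ℕ) (x : ℚ) :
    (bernoulli n).eval x =
      ∑ i ∈ range (n + 1), (n.choose i : ℚ) * _root_.bernoulli i * x ^ (n - i) := by
  simp only [bernoulli, eval_finsetSum, eval_monomial]
  exact sum_congr rfl fun i _ => by ring

theorem eulerSecond_eval_eq_bernoulli (n : ℕ) (x : ℚ) :
    (eulerSecond n).eval x = 2 * (bernoulli n).eval x - 2 ^ n * (bernoulli n).eval (x / 2) := by
  rw [eulerSecond_eval, bernoulli_eval, bernoulli_eval, mul_sum, mul_sum, ← sum_sub_distrib]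
  refine sum_congr rfl fun i hi => ?_
  have hin : n = i + (n - i) := by grind
  rw [_root_.eulerSecond, div_pow, hin, pow_add, ← hin]
  field_simp

theorem eulerSecond_eval_add_two (n : ℕ) (x : ℚ) :
    (eulerSecond n).eval (x + 2) = (eulerSecond n).eval x + 2 * n * (x + 1) ^ (n - 1) := by
  have h₁ := bernoulli_eval_one_add n x
  have h₂ := bernoulli_eval_one_add n (1 + x)
  have h₃ := bernoulli_eval_one_add n (x / 2)
  have h₄ : (2 : ℚ) ^ n * (n * (x / 2) ^ (n - 1)) = 2 * n * x ^ (n - 1) := by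
    cases n with
    | zero => simp
    | succ n => rw [Nat.add_sub_cancel, div_pow, pow_succ]; field_simp
  rw [eulerSecond_eval_eq_bernoulli, eulerSecond_eval_eq_bernoulli,
    show x + 2 = 1 + (1 + x) by ring, h₂, h₁, show (1 + (1 + x)) / 2 = 1 + x / 2 by ring, h₃]
  linear_combination (-1 : ℚ) * h₄

theorem eulerSecond_eval_one {n : ℕ} (hodd : Odd n) (hn : 1 < n) : (eulerSecond n).eval 1 = 0 := by
  have hhalf : (bernoulli n).eval (1 / 2) = 0 := by
    have := bernoulli_eval_one_sub n (1 / 2)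
    rw [hodd.neg_one_pow, show (1 : ℚ) - 1 / 2 = 1 / 2 by norm_num] at this
    linarith
  rw [eulerSecond_eval_eq_bernoulli, bernoulli_eval_one, bernoulli'_eq_zero_of_odd hodd hn, hhalf]
  ring

theorem eulerSecond_eval_two_mul_add_one {n : ℕ} (hodd : Odd n) (hn : 1 < n) (k : ℕ) :
    (eulerSecond n).eval (2 * k + 1 : ℚ) = 2 * n * ∑ l ∈ Icc 1 k, ((2 * l : ℕ) : ℚ) ^ (n - 1) := by
  induction k with
  | zero => simpa using eulerSecond_eval_one hodd hn
  | succ k ih =>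
    rw [sum_Icc_succ_top (by omega), mul_add, ← ih, Nat.cast_succ,
      show 2 * ((k : ℚ) + 1) + 1 = 2 * k + 1 + 2 by ring, eulerSecond_eval_add_two]
    push_cast
    ring

end Polynomial

theorem eulerSecond_sum_formula (n k : ℕ) (hn : 1 ≤ n) :
    ∑ j ∈ Finset.range (n + 1),
        ((2 * n + 1).choose (2 * j) : ℚ) * (2 * k + 1) ^ (2 * n - 2 * j + 1) *
          eulerSecond (2 * j) =
      2 * (2 * n + 1) * ∑ l ∈ Finset.Icc 1 k, ((2 * l : ℕ) : ℚ) ^ (2 * n) := by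
  have hsum := Polynomial.eulerSecond_eval_two_mul_add_one (odd_two_mul_add_one n) (by omega) k
  rw [Polynomial.eulerSecond_eval, show 2 * n + 1 + 1 = 2 * (n + 1) by ring,
    sum_range_two_mul, Nat.add_sub_cancel] at hsum
  rw [show (2 * (2 * n + 1) : ℚ) = 2 * ((2 * n + 1 : ℕ) : ℚ) by push_cast; ring, ← hsum]
  refine sum_congr rfl fun j hj => ?_
  rw [eulerSecond_eq_zero_of_odd (odd_two_mul_add_one j),
    show 2 * n + 1 - 2 * j = 2 * n - 2 * j + 1 by grind]
  ring
end

section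
/- For all nonnegative integers n and k, (1/2)·∑_{m=0}^{n} C(n,m) · 4^m · ((−1)^{n−m} + (−3)^{n−m}) · B_m^{(−k)} = ((−1)^k/2) · ∑_{l=0}^{k} (−1)^l · l! · S(k,l) · ((4l+3)ⁿ + (4l+1)ⁿ), where B_m^{(−k)} = ∑_{j=0}^{m} (−1)^{m−j} · j! · (j+1)^k · S(m,j) is the poly-Bernoulli number of negative index. (That is, the poly-Euler number of the second kind Ê_n^{(−k)} admits the stated closed form.) -/
/-- Stirling numbers of the second kind (as rationals),
`S(n,j) = (1/j!) ∑_{i=0}^{j} (-1)^{j-i} C(j,i) i^n`. -/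
def stirling2 (n j : ℕ) : ℚ :=
  (1 / j.factorial) *
    ∑ i ∈ Finset.range (j + 1), (-1) ^ (j - i) * (j.choose i : ℚ) * (i : ℚ) ^ n

/-- Poly-Euler numbers of the second kind with negative index `-k`:
`Ê_n^{(-k)} = ((-1)^k/2) ∑_{l=0}^{k} (-1)^l l! S(k,l) ((4l+3)^n + (4l+1)^n)`. -/
def polyEulerSecondNeg (n k : ℕ) : ℚ :=
  ((-1) ^ k / 2) *
    ∑ l ∈ Finset.range (k + 1),
      (-1) ^ l * (l.factorial : ℚ) * stirling2 k l *
        ((4 * (l : ℚ) + 3) ^ n + (4 * (l : ℚ) + 1) ^ n)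

/-- Poly-Bernoulli numbers of negative index `-k`:
`B_m^{(-k)} = ∑_{j=0}^{m} (-1)^{m-j} j! (j+1)^k S(m,j)`. -/
def polyBernoulliNeg (k m : ℕ) : ℚ :=
  ∑ j ∈ Finset.range (m + 1),
    (-1) ^ (m - j) * (j.factorial : ℚ) * ((j : ℚ) + 1) ^ k * stirling2 m j

/-
By Kaneko's duality `B_m^{(-k)} = B_k^{(-m)}`, the left-hand side is
`(1/2) ∑_l (-1)^{k-l} l! S(k,l) ∑_m C(n,m) (4(l+1))^m ((-1)^{n-m} + (-3)^{n-m})`, and the inner sum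
is `(4l+3)^n + (4l+1)^n` by the binomial theorem. Duality comes from the polynomial
identity `x^k = ∑_l S(k,l) x(x-1)⋯(x-l+1)` (Newton's forward-difference formula at every natural
`x`), evaluated at `x = -(j+1)`: this gives
`(j+1)^k = ∑_l (-1)^{k-l} C(j+l,l) l! S(k,l)`, and substituting it into the definition of
`B_m^{(-k)}` yields a double sum symmetric under `(m,j) ↔ (k,l)`.
-/

open Finset Polynomial Nat
open scoped fwdDiff

lemma neg_one_pow_sub_of_le {R : Type*} [CommRing R] {k l : ℕ} (h : l ≤ k) :
    (-1 : R) ^ (k - l) = (-1) ^ k * (-1) ^ l := by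
  obtain ⟨d, rfl⟩ := Nat.exists_eq_add_of_le h
  rw [Nat.add_sub_cancel_left, pow_add, mul_right_comm, ← mul_pow, neg_one_mul, neg_neg, one_pow,
    one_mul]

lemma factorial_mul_stirling2 (m j : ℕ) :
    (j ! : ℚ) * stirling2 m j = (Δ_[1])^[j] (fun x : ℚ ↦ x ^ m) 0 := by
  rw [fwdDiff_iter_eq_sum_shift, stirling2, ← mul_assoc, mul_one_div_cancel (by positivity),
    one_mul]
  refine sum_congr rfl fun i _ ↦ ?_
  simp [zsmul_eq_mul]

lemma stirling2_eq_zero_of_lt {m j : ℕ} (h : m < j) : stirling2 m j = 0 := by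
  have := factorial_mul_stirling2 m j
  rw [fwdDiff_iter_pow_eq_zero_of_lt h] at this
  simpa [Nat.factorial_ne_zero] using this

lemma sum_choose_mul_factorial_mul_stirling2 (k n : ℕ) :
    ∑ l ∈ range (k + 1), (n.choose l : ℚ) * (l ! * stirling2 k l) = (n : ℚ) ^ k := by
  have newton := shift_eq_sum_fwdDiff_iter 1 (fun x : ℚ ↦ x ^ k) n 0
  simp only [zero_add, nsmul_eq_mul, mul_one, ← factorial_mul_stirling2] at newton
  rw [newton, sum_subset (range_subset_range.2 (by omega : k + 1 ≤ n + k + 1)),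
    sum_subset (range_subset_range.2 (by omega : n + 1 ≤ n + k + 1))]
  · intro l _ hl
    rw [choose_eq_zero_of_lt (by simpa using hl), cast_zero, zero_mul]
  · intro l _ hl
    rw [stirling2_eq_zero_of_lt (by simpa using hl), mul_zero, mul_zero]

theorem X_pow_eq_sum_stirling2_mul_descPochhammer (k : ℕ) :
    (X : ℚ[X]) ^ k = ∑ l ∈ range (k + 1), C (stirling2 k l) * descPochhammer ℚ l := by
  refine eq_of_infinite_eval_eq _ _
    (Set.infinite_of_injective_forall_mem Nat.cast_injective fun n : ℕ ↦ ?_)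
  simp only [Set.mem_ofPred_eq, eval_pow, eval_X, eval_finsetSum, eval_mul, eval_C,
    descPochhammer_eval_eq_descFactorial, descFactorial_eq_factorial_mul_choose,
    ← sum_choose_mul_factorial_mul_stirling2 k n]
  refine sum_congr rfl fun l _ ↦ ?_
  push_cast
  ring

lemma descPochhammer_eval_neg_natCast_add_one {R : Type*} [CommRing R] (j l : ℕ) :
    (descPochhammer R l).eval (-((j : R) + 1)) = (-1) ^ l * (l ! * (j + l).choose l : ℕ) := by
  have h := ascPochhammer_eval_neg_eq_descPochhammer R (-((j : R) + 1)) l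
  rw [neg_neg, ← cast_add_one, ← cast_ascFactorial, ascFactorial_eq_factorial_mul_choose] at h
  rw [h, ← mul_assoc, ← mul_pow]
  simp

theorem natCast_add_one_pow_eq_sum_stirling2 (k j : ℕ) :
    ((j : ℚ) + 1) ^ k =
      ∑ l ∈ range (k + 1), (-1) ^ (k - l) * ((j + l).choose l * (l ! * stirling2 k l)) := by
  have h := congrArg (eval (-((j : ℚ) + 1))) (X_pow_eq_sum_stirling2_mul_descPochhammer k)
  simp only [eval_pow, eval_X, eval_finsetSum, eval_mul, eval_C,
    descPochhammer_eval_neg_natCast_add_one, neg_pow ((j : ℚ) + 1)] at h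
  calc ((j : ℚ) + 1) ^ k = (-1) ^ k * ((-1) ^ k * ((j : ℚ) + 1) ^ k) := by
        rw [← mul_assoc, ← mul_pow]; norm_num
    _ = _ := by
        rw [h, mul_sum]
        refine sum_congr rfl fun l hl ↦ ?_
        rw [neg_one_pow_sub_of_le (mem_range_succ_iff.1 hl)]
        push_cast
        ring

theorem polyBernoulliNeg_eq_sum_sum (k m : ℕ) :
    polyBernoulliNeg k m =
      ∑ j ∈ range (m + 1), ∑ l ∈ range (k + 1),
        (-1) ^ (m - j) * (-1) ^ (k - l) * (j + l).choose l *
          ((j ! * stirling2 m j) * (l ! * stirling2 k l)) := by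
  refine sum_congr rfl fun j _ ↦ ?_
  rw [natCast_add_one_pow_eq_sum_stirling2, mul_sum, sum_mul]
  refine sum_congr rfl fun l _ ↦ ?_
  ring

theorem polyBernoulliNeg_comm (k m : ℕ) : polyBernoulliNeg k m = polyBernoulliNeg m k := by
  rw [polyBernoulliNeg_eq_sum_sum, polyBernoulliNeg_eq_sum_sum, sum_comm]
  refine sum_congr rfl fun l _ ↦ sum_congr rfl fun j _ ↦ ?_
  rw [add_comm j l, choose_symm_add]
  ring

theorem polyEulerSecondNeg_closed_form (n k : ℕ) :
    (1 / 2 : ℚ) *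
        ∑ m ∈ Finset.range (n + 1),
          (n.choose m : ℚ) * 4 ^ m * ((-1) ^ (n - m) + (-3) ^ (n - m)) *
            polyBernoulliNeg k m =
      polyEulerSecondNeg n k := by
  simp_rw [polyBernoulliNeg_comm k, polyBernoulliNeg, mul_sum]
  rw [sum_comm, polyEulerSecondNeg, mul_sum]
  refine sum_congr rfl fun l hl ↦ ?_
  have binom : ∑ m ∈ range (n + 1),
      (n.choose m : ℚ) * 4 ^ m * ((-1) ^ (n - m) + (-3) ^ (n - m)) * ((l : ℚ) + 1) ^ m =
        (4 * (l : ℚ) + 3) ^ n + (4 * l + 1) ^ n := by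
    rw [show 4 * (l : ℚ) + 3 = 4 * (l + 1) + -1 by ring,
      show 4 * (l : ℚ) + 1 = 4 * (l + 1) + -3 by ring, add_pow, add_pow, ← sum_add_distrib]
    refine sum_congr rfl fun m _ ↦ ?_
    rw [mul_pow]
    ring
  rw [← binom, mul_sum, mul_sum]
  refine sum_congr rfl fun m _ ↦ ?_
  rw [neg_one_pow_sub_of_le (k := k) (mem_range_succ_iff.1 hl)]
  ring
end

section
/- For every integer k and every integer n ≥ 0, B_n^{(k)} = ∑_{m=0}^{n} C(n,m) · ((2 − E_{n−m})/4ⁿ) · Ê_m^{(k)}, i.e., 4ⁿ · B_n^{(k)} = ∑_{m=0}^{n} C(n,m) · (2 − E_{n−m}) · Ê_m^{(k)}. -/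
/-- Poly-Bernoulli numbers: `B_m^{(k)} = ∑_{j=0}^{m} (-1)^{m-j} (j!/(j+1)^k) S(m,j)`,
for any integer index `k`. -/
def polyBernoulli (k : ℤ) (m : ℕ) : ℚ :=
  ∑ j ∈ Finset.range (m + 1),
    (-1) ^ (m - j) * ((j.factorial : ℚ) / ((j : ℚ) + 1) ^ k) * stirling2 m j

/-- Poly-Euler numbers of the second kind:
`Ê_n^{(k)} = (1/2) ∑_{m=0}^{n} C(n,m) 4^m ((-1)^{n-m} + (-3)^{n-m}) B_m^{(k)}`. -/
def polyEulerSecond (k : ℤ) (n : ℕ) : ℚ :=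
  (1 / 2) *
    ∑ m ∈ Finset.range (n + 1),
      (n.choose m : ℚ) * 4 ^ m * ((-1) ^ (n - m) + (-3) ^ (n - m)) * polyBernoulli k m

open PowerSeries Finset Nat

section Egf

variable {K : Type*} [Field K]

def egf (a : ℕ → K) : K⟦X⟧ := mk fun n => a n / n !

@[simp]
theorem coeff_egf (a : ℕ → K) (n : ℕ) : coeff n (egf a) = a n / n ! := coeff_mk _ _

theorem rescale_egf (c : K) (a : ℕ → K) : rescale c (egf a) = egf fun n => c ^ n * a n := by
  ext n
  simp [mul_div_assoc]

theorem egf_add (a b : ℕ → K) : egf a + egf b = egf fun n => a n + b n := by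
  ext n
  simp [add_div]

section Exp

variable [Algebra ℚ K]

theorem exp_eq_egf : exp K = egf fun _ => 1 := by
  ext n
  simp

theorem two_mul_exp_sub_egf (a : ℕ → K) : 2 * exp K - egf a = egf fun n => 2 - a n := by
  rw [← map_ofNat C 2]
  ext n
  simp [div_eq_mul_inv, sub_mul]

theorem exp_mul_rescale_exp (a : K) : exp K * rescale a (exp K) = rescale (1 + a) (exp K) := by
  simpa using exp_mul_exp_eq_exp_add 1 a

end Exp

variable [CharZero K]

theorem egf_injective : Function.Injective (egf (K := K)) := by
  intro a b h
  funext n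
  simpa [factorial_ne_zero] using congrArg (coeff n) h

theorem egf_mul (a b : ℕ → K) :
    egf a * egf b = egf fun n => ∑ m ∈ range (n + 1), (n.choose m : K) * a m * b (n - m) := by
  ext n
  rw [coeff_mul, Nat.sum_antidiagonal_eq_sum_range_succ_mk, coeff_egf, sum_div]
  refine sum_congr rfl fun m hm => ?_
  rw [cast_choose K (mem_range_succ_iff.1 hm)]
  simp only [coeff_egf]
  field_simp
  exact (mul_div_mul_right _ _ (cast_ne_zero.2 (factorial_ne_zero n))).symm

end Egf

theorem sum_range_two_mul_add_one_of_odd_eq_zero {M : Type*} [AddCommMonoid M] {g : ℕ → M}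
    (hg : ∀ i, g (2 * i + 1) = 0) (m : ℕ) :
    ∑ j ∈ range (2 * m + 1), g j = ∑ i ∈ range (m + 1), g (2 * i) := by
  induction m with
  | zero => simp
  | succ m ih =>
    rw [show 2 * (m + 1) + 1 = 2 * m + 1 + 1 + 1 by ring, sum_range_succ, sum_range_succ, ih,
      hg, add_zero, sum_range_succ _ (m + 1)]
    rfl

section Euler

variable {K : Type*} [Field K] [Algebra ℚ K] {E : ℕ → K}

theorem egf_mul_exp_add_exp_neg_eq_two (hE0 : E 0 = 1) (hEodd : ∀ m : ℕ, E (2 * m + 1) = 0)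
    (hErec : ∀ m : ℕ, 1 ≤ m → ∑ j ∈ range (m + 1), ((2 * m).choose (2 * j) : K) * E (2 * j) = 0) :
    egf E * (exp K + rescale (-1) (exp K)) = 2 := by
  have := algebraRat.charZero K
  have heven : rescale (-1) (egf E) = egf E := by
    rw [rescale_egf]
    congr 1
    funext n
    rcases Nat.even_or_odd' n with ⟨m, rfl | rfl⟩
    · simp [pow_mul]
    · simp [hEodd]
  rw [mul_add, ← heven, ← map_mul, heven, ← map_ofNat C 2]
  ext n
  simp only [exp_eq_egf, egf_mul, map_add, coeff_rescale, coeff_egf, coeff_C, mul_one]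
  rcases Nat.even_or_odd' n with ⟨m, rfl | rfl⟩
  · rw [sum_range_two_mul_add_one_of_odd_eq_zero (by simp [hEodd])]
    rcases Nat.eq_zero_or_pos m with rfl | hm
    · simp [hE0, one_add_one_eq_two]
    · simp [hErec m hm, hm.ne']
  · simp [pow_succ, pow_mul]

theorem two_mul_exp_sub_egf_mul_eq_two (hcosh : egf E * (exp K + rescale (-1) (exp K)) = 2) :
    (2 * exp K - egf E) * (rescale (-1) (exp K) + rescale (-3) (exp K)) = 2 := by
  have huv : exp K * rescale (-1) (exp K) = 1 := by
    rw [exp_mul_rescale_exp, add_neg_cancel]; simp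
  have huw : exp K * rescale (-2) (exp K) = rescale (-1) (exp K) := by
    rw [exp_mul_rescale_exp]; congr; ring
  have hvw : rescale (-1) (exp K) * rescale (-2) (exp K) = rescale (-3) (exp K) := by
    rw [exp_mul_exp_eq_exp_add]; congr; ring
  linear_combination (egf E - 2 * exp K) * hvw + (2 + 2 * rescale (-2) (exp K)) * huv
    - rescale (-2) (exp K) * hcosh + egf E * huw

end Euler

theorem two_mul_egf_polyEulerSecond (k : ℤ) :
    2 * egf (polyEulerSecond k) =
      rescale 4 (egf (polyBernoulli k)) * (rescale (-1) (exp ℚ) + rescale (-3) (exp ℚ)) := by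
  rw [exp_eq_egf, rescale_egf, rescale_egf, rescale_egf, egf_add, egf_mul, ← map_ofNat C 2]
  ext n
  simp only [coeff_C_mul, coeff_egf, polyEulerSecond]
  field_simp
  exact sum_congr rfl fun m _ => by ring

theorem rescale_four_egf_polyBernoulli {E : ℕ → ℚ}
    (hcosh : egf E * (exp ℚ + rescale (-1) (exp ℚ)) = 2) (k : ℤ) :
    rescale 4 (egf (polyBernoulli k)) = egf (polyEulerSecond k) * egf fun n => 2 - E n := by
  rw [← two_mul_exp_sub_egf]
  have htwo : (2 : ℚ⟦X⟧) ≠ 0 := by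
    rw [← map_ofNat C 2]; exact (map_ne_zero_iff _ C_injective).2 two_ne_zero
  refine mul_left_cancel₀ htwo ?_
  calc 2 * rescale 4 (egf (polyBernoulli k))
      = rescale 4 (egf (polyBernoulli k)) * ((2 * exp ℚ - egf E) *
          (rescale (-1) (exp ℚ) + rescale (-3) (exp ℚ))) := by
        rw [two_mul_exp_sub_egf_mul_eq_two hcosh, mul_comm]
    _ = rescale 4 (egf (polyBernoulli k)) * (rescale (-1) (exp ℚ) + rescale (-3) (exp ℚ)) *
          (2 * exp ℚ - egf E) := by ring
    _ = 2 * (egf (polyEulerSecond k) * (2 * exp ℚ - egf E)) := by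
        rw [← two_mul_egf_polyEulerSecond, mul_assoc]

theorem polyBernoulli_eq_sum_polyEulerSecond (E : ℕ → ℚ) (hE0 : E 0 = 1)
    (hEodd : ∀ m : ℕ, E (2 * m + 1) = 0)
    (hErec : ∀ m : ℕ, 1 ≤ m →
      ∑ j ∈ Finset.range (m + 1), ((2 * m).choose (2 * j) : ℚ) * E (2 * j) = 0)
    (k : ℤ) (n : ℕ) :
    polyBernoulli k n =
      ∑ m ∈ Finset.range (n + 1),
        (n.choose m : ℚ) * ((2 - E (n - m)) / 4 ^ n) * polyEulerSecond k m := by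
  have hegf :=
    rescale_four_egf_polyBernoulli (egf_mul_exp_add_exp_neg_eq_two hE0 hEodd hErec) k
  rw [rescale_egf, egf_mul] at hegf
  have hcoeff := congrFun (egf_injective hegf) n
  calc polyBernoulli k n = 4 ^ n * polyBernoulli k n / 4 ^ n := by field_simp
    _ = _ := by
      rw [hcoeff, sum_div]
      exact sum_congr rfl fun m _ => by ring
end

section
/- For all nonnegative integers n and k, Ê_n^{(−k)} = ∑_{j=0}^{min(n,k)} (j!)² · ∑_{m=0}^{n} ∑_{μ=0}^{k} C(n,m) · C(k,μ) · S(n−m, j) · S(μ, j) · 4^{n−m} · (3^m + 1)/2. In particular, Ê_n^{(−k)} is a nonnegative integer. -/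
/-! Expanding `l ^ p = ∑ⱼ j! S(p,j) C(l,j)` turns the sum defining `Ê_n^{(-k)}` into a
combination of the transforms `∑ₗ (-1)^(k+l) l! S(k,l) C(l,j)`, and each of these equals
`j! S(k+1,j+1) = j! ∑_μ C(k,μ) S(μ,j)`. Together with the binomial expansion of
`(4l+3)^n + (4l+1)^n` this gives the formula, whose terms are nonnegative integers because
`3^m + 1` is even. The explicit formula for `S(n,j)` agrees with the recursively defined
`Nat.stirlingSecond n j`: both are the `j`-th forward difference at `0` of `x ↦ x ^ n`,
divided by `j!`. -/

open Finset Nat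

theorem Finset.sum_range_succ_eq_sum_range_of_eq_zero {M : Type*} [AddCommMonoid M] {f : ℕ → M}
    {n : ℕ} (h₀ : f 0 = 0) (hn : f (n + 1) = 0) :
    ∑ i ∈ range (n + 1), f (i + 1) = ∑ i ∈ range (n + 1), f i := by
  rw [← add_zero (∑ i ∈ range (n + 1), f (i + 1)), ← h₀, ← sum_range_succ', sum_range_succ, hn,
    add_zero]

theorem Nat.mul_choose_eq (x j : ℕ) :
    x * x.choose j = j * x.choose j + (j + 1) * x.choose (j + 1) := by
  rcases le_or_gt j x with h | h
  · rw [mul_comm (j + 1), choose_succ_right_eq, mul_comm _ (x - j), ← add_mul,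
      Nat.add_sub_of_le h]
  · simp [choose_eq_zero_of_lt h, choose_eq_zero_of_lt (h.trans (lt_add_one j))]

theorem Nat.pow_eq_sum_stirlingSecond_mul_choose (x p : ℕ) :
    x ^ p = ∑ j ∈ range (p + 1), stirlingSecond p j * j ! * x.choose j := by
  induction p with
  | zero => simp
  | succ p ih =>
    have hshift := sum_range_succ_eq_sum_range_of_eq_zero
      (f := fun j => j * stirlingSecond p j * j ! * x.choose j) (by simp)
      (by rw [stirlingSecond_eq_zero_of_lt (lt_add_one p)]; simp)
    calc x ^ (p + 1)
        = ∑ j ∈ range (p + 1), (j * stirlingSecond p j * j ! * x.choose j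
            + stirlingSecond p j * (j + 1)! * x.choose (j + 1)) := by
          rw [pow_succ, ih, sum_mul]
          refine sum_congr rfl fun j _ => ?_
          rw [factorial_succ]
          linear_combination (stirlingSecond p j * j !) * mul_choose_eq x j
      _ = ∑ j ∈ range (p + 1),
            stirlingSecond (p + 1) (j + 1) * (j + 1)! * x.choose (j + 1) := by
          rw [sum_add_distrib, ← hshift, ← sum_add_distrib]
          refine sum_congr rfl fun j _ => ?_
          rw [stirlingSecond_succ_succ]
          ring
      _ = _ := by simp [sum_range_succ' _ (p + 1)]

open fwdDiff in
theorem Nat.factorial_mul_stirlingSecond_eq_sum (n j : ℕ) :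
    (j ! * stirlingSecond n j : ℤ)
      = ∑ i ∈ range (j + 1), (-1) ^ (j - i) * j.choose i * (i : ℤ) ^ n := by
  have hpow : (fun x : ℕ => (x : ℤ) ^ n)
      = ∑ i ∈ range (n + 1), (stirlingSecond n i * i ! : ℤ) • fun x : ℕ => (x.choose i : ℤ) := by
    ext x
    simp only [Finset.sum_apply, Pi.smul_apply, smul_eq_mul]
    exact_mod_cast (pow_eq_sum_stirlingSecond_mul_choose x n).trans
      (sum_congr rfl fun i _ => by ring)
  have hdiff := fwdDiff_iter_eq_sum_shift 1 (fun x : ℕ => (x : ℤ) ^ n) j 0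
  simp only [hpow, fwdDiff_iter_finsetSum, fwdDiff_iter_const_smul, Finset.sum_apply,
    Pi.smul_apply, fwdDiff_iter_choose_zero, smul_eq_mul, mul_ite, mul_one, mul_zero, sum_ite_eq,
    mem_range, zero_add] at hdiff
  rw [← hdiff]
  split_ifs with hj
  · ring
  · rw [stirlingSecond_eq_zero_of_lt (by omega), cast_zero, mul_zero]

theorem stirling2_eq_stirlingSecond (n j : ℕ) : stirling2 n j = stirlingSecond n j := by
  have h := congrArg (Int.cast : ℤ → ℚ) (factorial_mul_stirlingSecond_eq_sum n j)
  push_cast at h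
  rw [stirling2, ← h]
  field_simp

theorem Nat.stirlingSecond_succ_succ_eq_sum_choose (k j : ℕ) :
    stirlingSecond (k + 1) (j + 1) = ∑ μ ∈ range (k + 1), k.choose μ * stirlingSecond μ j := by
  induction k generalizing j with
  | zero => cases j <;> simp [stirlingSecond_succ_succ]
  | succ k ih =>
    have hpascal := sum_choose_succ_mul (fun μ _ => stirlingSecond μ j) k
    simp only [cast_id] at hpascal
    rw [hpascal, ← ih, stirlingSecond_succ_succ (k + 1)]
    cases j with
    | zero => simp
    | succ j =>
      have hshifted : ∑ μ ∈ range (k + 1), k.choose μ * stirlingSecond (μ + 1) (j + 1)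
          = (j + 1) * stirlingSecond (k + 1) (j + 2) + stirlingSecond (k + 1) (j + 1) := by
        rw [ih (j + 1), ih j]
        simp only [stirlingSecond_succ_succ _ j, mul_add, sum_add_distrib,
          mul_left_comm _ (j + 1), ← mul_sum]
      rw [hshifted]
      ring

section altStirlingSum

variable {R : Type*} [CommRing R]

def altStirlingSum (k : ℕ) (f : ℕ → R) : R :=
  ∑ l ∈ range (k + 1), (-1) ^ (k + l) * l ! * stirlingSecond k l * f l

theorem altStirlingSum_sum_mul {ι : Type*} (k : ℕ) (s : Finset ι) (c : ι → R) (g : ι → ℕ → R) :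
    altStirlingSum k (fun l => ∑ i ∈ s, c i * g i l) = ∑ i ∈ s, c i * altStirlingSum k (g i) := by
  simp only [altStirlingSum, mul_sum]
  rw [sum_comm]
  exact sum_congr rfl fun i _ => sum_congr rfl fun l _ => by ring

/-- Summation by parts, from `S(k+1,l+1) = (l+1) S(k,l+1) + S(k,l)`. -/
theorem altStirlingSum_succ (k : ℕ) (f : ℕ → R) :
    altStirlingSum (k + 1) f = altStirlingSum k (fun l => (l + 1) * f (l + 1) - l * f l) := by
  have hshift := sum_range_succ_eq_sum_range_of_eq_zero
    (f := fun l => (-1 : R) ^ (k + l) * l ! * stirlingSecond k l * (l * f l)) (by simp)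
    (by rw [stirlingSecond_eq_zero_of_lt (lt_add_one k)]; simp)
  rw [altStirlingSum, altStirlingSum, sum_range_succ']
  simp only [stirlingSecond_succ_zero, cast_zero, mul_zero, zero_mul, add_zero, mul_sub,
    sum_sub_distrib, ← hshift]
  rw [← sum_sub_distrib]
  refine sum_congr rfl fun l _ => ?_
  rw [stirlingSecond_succ_succ, factorial_succ]
  push_cast
  ring

theorem altStirlingSum_choose (k j : ℕ) :
    altStirlingSum k (fun l => (l.choose j : R)) = j ! * stirlingSecond (k + 1) (j + 1) := by
  induction k generalizing j with
  | zero =>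
    cases j <;> simp [altStirlingSum, stirlingSecond_eq_zero_of_lt, stirlingSecond_self]
  | succ k ih =>
    rw [altStirlingSum_succ]
    cases j with
    | zero =>
      simpa [stirlingSecond_succ_succ (k + 1)] using ih 0
    | succ j =>
      have hchoose (l : ℕ) :
          ((l : R) + 1) * ((l + 1).choose (j + 1) : R) - l * (l.choose (j + 1) : R)
            = (j + 1 : R) * (l.choose j : R) + (j + 2 : R) * (l.choose (j + 1) : R) := by
        have := congrArg (Nat.cast : ℕ → R) (mul_choose_eq l j)
        push_cast [choose_succ_succ] at this ⊢
        linear_combination this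
      have hlin := altStirlingSum_sum_mul k univ ![(j + 1 : R), (j + 2 : R)]
        ![fun l : ℕ => (l.choose j : R), fun l : ℕ => (l.choose (j + 1) : R)]
      simp only [Fin.sum_univ_two, Matrix.cons_val_zero, Matrix.cons_val_one] at hlin
      rw [funext hchoose, hlin, ih, ih, stirlingSecond_succ_succ (k + 1) (j + 1), factorial_succ]
      push_cast
      ring

theorem altStirlingSum_pow (k : ℕ) {p N : ℕ} (hpN : p ≤ N) :
    altStirlingSum k (fun l => (l : R) ^ p)
      = ∑ j ∈ range (N + 1),
          (j ! : R) ^ 2 * stirlingSecond p j * stirlingSecond (k + 1) (j + 1) := by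
  have hpow : (fun l : ℕ => (l : R) ^ p)
      = fun l => ∑ j ∈ range (p + 1), (stirlingSecond p j * j ! : R) * (l.choose j : R) := by
    ext l
    simpa using congrArg (Nat.cast : ℕ → R) (pow_eq_sum_stirlingSecond_mul_choose l p)
  rw [hpow, altStirlingSum_sum_mul,
    ← sum_subset (range_subset_range.2 (by omega : p + 1 ≤ N + 1))]
  · refine sum_congr rfl fun j _ => ?_
    rw [altStirlingSum_choose]
    ring
  · intro j _ hj
    rw [stirlingSecond_eq_zero_of_lt (by simpa using hj)]
    simp

theorem altStirlingSum_sum_choose_mul_pow (k n : ℕ) (w : ℕ → R) :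
    altStirlingSum k (fun l => ∑ m ∈ range (n + 1), n.choose m * w m * (l : R) ^ (n - m))
      = ∑ j ∈ range (min n k + 1), (j ! : R) ^ 2 *
          ∑ m ∈ range (n + 1), ∑ μ ∈ range (k + 1),
            n.choose m * k.choose μ * stirlingSecond (n - m) j * stirlingSecond μ j * w m := by
  rw [altStirlingSum_sum_mul]
  simp only [altStirlingSum_pow k (n.sub_le _), mul_sum]
  rw [sum_comm]
  refine Eq.trans (sum_subset (range_subset_range.2 (by omega : min n k + 1 ≤ n + 1))
    fun j hjn hjk => ?_).symm ?_
  · rw [stirlingSecond_eq_zero_of_lt (by simp at hjn hjk; omega)]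
    simp
  · refine sum_congr rfl fun j _ => sum_congr rfl fun m _ => ?_
    rw [stirlingSecond_succ_succ_eq_sum_choose]
    push_cast
    rw [mul_sum, mul_sum]
    exact sum_congr rfl fun μ _ => by ring

end altStirlingSum

theorem polyEulerSecondNeg_positivity (n k : ℕ) :
    polyEulerSecondNeg n k =
      ∑ j ∈ Finset.range (min n k + 1),
        (j.factorial : ℚ) ^ 2 *
          ∑ m ∈ Finset.range (n + 1), ∑ μ ∈ Finset.range (k + 1),
            (n.choose m : ℚ) * (k.choose μ : ℚ) * stirling2 (n - m) j * stirling2 μ j *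
              (4 ^ (n - m) * (3 ^ m + 1) / 2) ∧
    ∃ z : ℕ, polyEulerSecondNeg n k = (z : ℚ) := by
  have hbinom (l : ℕ) : ((4 * (l : ℚ) + 3) ^ n + (4 * (l : ℚ) + 1) ^ n) / 2
      = ∑ m ∈ range (n + 1),
          n.choose m * (4 ^ (n - m) * (3 ^ m + 1) / 2) * (l : ℚ) ^ (n - m) := by
    rw [add_comm _ (3 : ℚ), add_comm _ (1 : ℚ), add_pow, add_pow, ← sum_add_distrib, sum_div]
    exact sum_congr rfl fun m _ => by rw [one_pow, mul_pow]; ring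
  have hpoly : polyEulerSecondNeg n k = altStirlingSum k (fun l => ∑ m ∈ range (n + 1),
      n.choose m * (4 ^ (n - m) * (3 ^ m + 1) / 2) * (l : ℚ) ^ (n - m)) := by
    simp only [polyEulerSecondNeg, altStirlingSum, mul_sum, ← hbinom,
      stirling2_eq_stirlingSecond]
    exact sum_congr rfl fun l _ => by ring
  have hhalf (m : ℕ) : (((3 ^ m + 1) / 2 : ℕ) : ℚ) = (3 ^ m + 1) / 2 := by
    rw [Nat.cast_div_charZero (Odd.pow (by decide : Odd 3)).add_one.two_dvd]
    push_cast
    rfl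
  simp only [hpoly, altStirlingSum_sum_choose_mul_pow, stirling2_eq_stirlingSecond, true_and]
  refine ⟨∑ j ∈ range (min n k + 1), j ! ^ 2 * ∑ m ∈ range (n + 1), ∑ μ ∈ range (k + 1),
      n.choose m * k.choose μ * stirlingSecond (n - m) j * stirlingSecond μ j *
        (4 ^ (n - m) * ((3 ^ m + 1) / 2)), ?_⟩
  push_cast [hhalf]
  simp only [mul_div_assoc]
end

section
/- For every prime p > 3 and every nonnegative integer k, Ê_p^{(−k)} ≡ 2^{k+2} − 2 (mod p). -/
/-!
Since `l! S(k,l) = Δ^l (x ↦ x^k) (0)`, the number `Ê_p^{(-k)}` is `((-1)^k/2)` times the integer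
`∑_l (-1)^l Δ^l x^k (0) ((4l+3)^p + (4l+1)^p)`. By Fermat's little theorem (and parity) each
`(4l+3)^p + (4l+1)^p` is congruent to `8l+4` modulo `2p`. The remaining sum is evaluated by the
Newton series of `x^k` at `-1` and `-2`, which is exact because `Δ^{k+1} x^k = 0`:
`∑_l (-1)^l Δ^l x^k (0) = (-1)^k` and `∑_l (-1)^l (l+1) Δ^l x^k (0) = (-2)^k`.
-/

open Finset Function fwdDiff

section

variable {M G : Type*} [AddCommMonoid M] [AddCommGroup G] (h : M)

theorem fwdDiff_iter_apply_add_self (f : M → G) (n : ℕ) (y : M) :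
    Δ_[h] ^[n] f (y + h) = Δ_[h] ^[n] f y + Δ_[h] ^[n + 1] f y := by
  rw [iterate_succ_apply', fwdDiff, add_sub_cancel]

-- Truncations of `(1 + Δ)⁻¹ = ∑ (-Δ)^l` and `(1 + Δ)⁻² = ∑ (l + 1) (-Δ)^l`, with remainders.
theorem sum_range_neg_one_pow_smul_fwdDiff_iter (f : M → G) (y : M) (m : ℕ) :
    ∑ l ∈ range (m + 1), (-1 : ℤ) ^ l • Δ_[h] ^[l] f (y + h)
      = f y + (-1 : ℤ) ^ m • Δ_[h] ^[m + 1] f y := by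
  induction m with
  | zero => simpa using fwdDiff_iter_apply_add_self h f 0 y
  | succ m ih =>
    rw [sum_range_succ, ih, fwdDiff_iter_apply_add_self, pow_succ]
    module

theorem sum_range_neg_one_pow_mul_succ_smul_fwdDiff_iter (f : M → G) (y : M) (m : ℕ) :
    ∑ l ∈ range (m + 1), ((-1 : ℤ) ^ l * (l + 1)) • Δ_[h] ^[l] f (y + h + h)
      = f y + (-1 : ℤ) ^ m • (((m : ℤ) + 2) • Δ_[h] ^[m + 1] f y
          + ((m : ℤ) + 1) • Δ_[h] ^[m + 2] f y) := by
  have shift_two (n : ℕ) : Δ_[h] ^[n] f (y + h + h)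
      = Δ_[h] ^[n] f y + (2 : ℤ) • Δ_[h] ^[n + 1] f y + Δ_[h] ^[n + 2] f y := by
    rw [fwdDiff_iter_apply_add_self, fwdDiff_iter_apply_add_self, fwdDiff_iter_apply_add_self]
    module
  induction m with
  | zero =>
    rw [sum_range_one, shift_two, iterate_zero_apply]
    push_cast
    module
  | succ m ih =>
    rw [sum_range_succ, ih, shift_two, pow_succ]
    push_cast
    module

end

section

variable {R : Type*} [CommRing R]

theorem sum_range_neg_one_pow_mul_fwdDiff_iter_pow (k : ℕ) (y : R) :
    ∑ l ∈ range (k + 1), (-1) ^ l * Δ_[1] ^[l] (fun r : R ↦ r ^ k) (y + 1) = y ^ k := by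
  have := sum_range_neg_one_pow_smul_fwdDiff_iter (1 : R) (fun r : R ↦ r ^ k) y k
  simpa [fwdDiff_iter_pow_eq_zero_of_lt (Nat.lt_succ_self k)] using this

theorem sum_range_neg_one_pow_mul_succ_mul_fwdDiff_iter_pow (k : ℕ) (y : R) :
    ∑ l ∈ range (k + 1), (-1) ^ l * (l + 1) * Δ_[1] ^[l] (fun r : R ↦ r ^ k) (y + 1 + 1)
      = y ^ k := by
  have := sum_range_neg_one_pow_mul_succ_smul_fwdDiff_iter (1 : R) (fun r : R ↦ r ^ k) y k
  simpa [fwdDiff_iter_pow_eq_zero_of_lt (Nat.lt_succ_self k),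
    fwdDiff_iter_pow_eq_zero_of_lt (by omega : k < k + 2)] using this

theorem sum_range_neg_one_pow_mul_fwdDiff_iter_pow_mul_eight_mul_add_four (k : ℕ) :
    ∑ l ∈ range (k + 1), (-1) ^ l * Δ_[1] ^[l] (fun r : R ↦ r ^ k) 0 * (8 * l + 4)
      = (-1) ^ k * (2 ^ (k + 3) - 4) := by
  have h1 := sum_range_neg_one_pow_mul_fwdDiff_iter_pow k (-1 : R)
  have h2 := sum_range_neg_one_pow_mul_succ_mul_fwdDiff_iter_pow k (-2 : R)
  rw [neg_add_cancel] at h1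
  rw [show (-2 : R) + 1 + 1 = 0 by ring, neg_pow (2 : R)] at h2
  calc _ = 8 * ∑ l ∈ range (k + 1), (-1) ^ l * (l + 1) * Δ_[1] ^[l] (fun r : R ↦ r ^ k) 0
        - 4 * ∑ l ∈ range (k + 1), (-1) ^ l * Δ_[1] ^[l] (fun r : R ↦ r ^ k) 0 := by
        rw [mul_sum, mul_sum, ← sum_sub_distrib]
        exact sum_congr rfl fun l _ ↦ by ring
    _ = _ := by rw [h1, h2]; ring

end

theorem Int.two_mul_dvd_pow_sub_self {p : ℕ} (hp : p.Prime) (hp2 : p ≠ 2) (a : ℤ) :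
    2 * (p : ℤ) ∣ a ^ p - a := by
  have hodd : 2 ∣ a ^ p - a := by
    rw [← even_iff_two_dvd, Int.even_sub, Int.even_pow' hp.ne_zero]
  have hfermat : (p : ℤ) ∣ a ^ p - a := by
    have := Fact.mk hp
    rw [← ZMod.intCast_zmod_eq_zero_iff_dvd]
    push_cast
    rw [ZMod.pow_card, sub_self]
  refine IsCoprime.mul_dvd ?_ hodd hfermat
  exact Nat.isCoprime_iff_coprime.mpr ((Nat.coprime_primes Nat.prime_two hp).mpr hp2.symm)

theorem factorial_mul_stirling2_s14 (k l : ℕ) :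
    (l.factorial : ℚ) * stirling2 k l = Δ_[1] ^[l] (fun r : ℤ ↦ r ^ k) 0 := by
  rw [stirling2, fwdDiff_iter_eq_sum_shift, ← mul_assoc, mul_one_div_cancel (by positivity),
    one_mul]
  push_cast
  simp

theorem polyEulerSecondNeg_eq_sum_fwdDiff_iter (n k : ℕ) :
    polyEulerSecondNeg n k = (-1) ^ k / 2 *
      ((∑ l ∈ range (k + 1), (-1) ^ l * Δ_[1] ^[l] (fun r : ℤ ↦ r ^ k) 0 *
        ((4 * l + 3) ^ n + (4 * l + 1) ^ n) : ℤ) : ℚ) := by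
  rw [polyEulerSecondNeg]
  push_cast
  congr! 2 with l
  rw [mul_assoc _ _ (stirling2 k l), factorial_mul_stirling2_s14]

theorem polyEulerSecondNeg_prime_congr (p : ℕ) (hp : Nat.Prime p) (hp3 : 3 < p) (k : ℕ) :
    ∃ z : ℤ, polyEulerSecondNeg p k - (2 ^ (k + 2) - 2) = (p : ℚ) * (z : ℚ) := by
  have hp2 : p ≠ 2 := by omega
  obtain ⟨z, hz⟩ : 2 * (p : ℤ) ∣ ∑ l ∈ range (k + 1), (-1) ^ l *
      Δ_[1] ^[l] (fun r : ℤ ↦ r ^ k) 0 * ((4 * l + 3) ^ p + (4 * l + 1) ^ p)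
        - (-1) ^ k * (2 ^ (k + 3) - 4) := by
    rw [← sum_range_neg_one_pow_mul_fwdDiff_iter_pow_mul_eight_mul_add_four, ← sum_sub_distrib]
    refine dvd_sum fun l _ ↦ ?_
    have := dvd_add (Int.two_mul_dvd_pow_sub_self hp hp2 (4 * l + 3))
      (Int.two_mul_dvd_pow_sub_self hp hp2 (4 * l + 1))
    convert this.mul_left ((-1) ^ l * Δ_[1] ^[l] (fun r : ℤ ↦ r ^ k) 0) using 1
    ring
  refine ⟨(-1) ^ k * z, ?_⟩
  rw [polyEulerSecondNeg_eq_sum_fwdDiff_iter, eq_add_of_sub_eq hz]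
  have hsq : (-1 : ℚ) ^ k * (-1) ^ k = 1 := by rw [← mul_pow]; norm_num
  push_cast
  linear_combination (2 ^ (k + 2) - 2 : ℚ) * hsq
end

section
/- For all integers N ≥ 0 and n ≥ 1, Ê_{N,2n} = (−1)ⁿ · (2n)! · det M, where M is the n×n matrix whose (i,j) entry (1 ≤ i, j ≤ n) is (2N+1)!/(2N+2(i−j)+3)! if j ≤ i, 1 if j = i+1, and 0 if j > i+1. (Its first column is (2N+1)!/(2N+3)!, (2N+1)!/(2N+5)!, …, (2N+1)!/(2N+2n+1)!.) -/
/-!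
Put `x k = Ê_{N,2k} / (2k)!` and `f k = (2N+1)! / (2N+2k+3)!`. The defining recurrence
becomes `x (k+1) = -∑_{j ≤ k} f (k-j) x j` with `x 0 = 1`, i.e. the vector `(x 0, …, x (n-1))`
solves `H x = -x n • e_last` for the lower Hessenberg Toeplitz matrix `H` of the statement.
Comparing first coordinates of `det H • x = adj H (H x)` gives `det H = -x n · adj H 0 last`,
and this cofactor is `(-1)^(n-1)` because the complementary minor is lower unitriangular.
-/

open Finset Matrix

section ToeplitzHessenberg

variable {R : Type*} [CommRing R]

def toeplitzHessenberg (f : ℕ → R) (n : ℕ) : Matrix (Fin n) (Fin n) R :=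
  of fun i j => if (j : ℕ) ≤ i then f (i - j) else if (j : ℕ) = i + 1 then 1 else 0

theorem det_toeplitzHessenberg_submatrix_castSucc_succ (f : ℕ → R) (m : ℕ) :
    ((toeplitzHessenberg f (m + 1)).submatrix Fin.castSucc Fin.succ).det = 1 := by
  rw [det_of_isLowerTriangular _ fun i j hij => ?_]
  · simp [toeplitzHessenberg]
  · have hij : (i : ℕ) < j := hij
    simp only [toeplitzHessenberg, submatrix_apply, of_apply, Fin.val_castSucc, Fin.val_succ]
    rw [if_neg (by omega), if_neg (by omega)]

theorem toeplitzHessenberg_mulVec (f x : ℕ → R)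
    (hx : ∀ k, x (k + 1) = -∑ j ∈ range (k + 1), f (k - j) * x j) (m : ℕ) :
    toeplitzHessenberg f (m + 1) *ᵥ (fun i => x i) = Pi.single (Fin.last m) (-x (m + 1)) := by
  funext i
  have hrow : ∀ j : Fin (m + 1), toeplitzHessenberg f (m + 1) i j * x j =
      (if (j : ℕ) ≤ i then f (i - j) * x j else 0) +
        (if (j : ℕ) = i + 1 then x j else 0) := by
    intro j
    simp only [toeplitzHessenberg, of_apply]
    split_ifs <;> first | ring | omega
  have hlower : ∑ j ∈ range (m + 1), (if j ≤ i then f (i - j) * x j else 0) = -x (i + 1) := by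
    have : (range (m + 1)).filter (· ≤ (i : ℕ)) = range (i + 1) := by
      ext j; simp only [mem_filter, mem_range]; omega
    rw [← sum_filter, this, hx, neg_neg]
  rw [mulVec, dotProduct, sum_congr rfl fun j _ => hrow j, sum_add_distrib,
    Fin.sum_univ_eq_sum_range (fun j => if j ≤ (i : ℕ) then f (i - j) * x j else 0),
    Fin.sum_univ_eq_sum_range (fun j => if j = (i : ℕ) + 1 then x j else 0),
    sum_ite_eq', hlower, Pi.single_apply]
  by_cases hi : i = Fin.last m
  · subst hi; simp
  · have := Fin.val_lt_last hi
    rw [if_pos (mem_range.2 (by omega)), if_neg hi, neg_add_cancel]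

theorem det_toeplitzHessenberg (f x : ℕ → R) (hx0 : x 0 = 1)
    (hx : ∀ k, x (k + 1) = -∑ j ∈ range (k + 1), f (k - j) * x j) (n : ℕ) :
    (toeplitzHessenberg f n).det = (-1) ^ n * x n := by
  cases n with
  | zero => simp [hx0]
  | succ m =>
    set A := toeplitzHessenberg f (m + 1)
    have hcofactor : adjugate A 0 (Fin.last m) = (-1) ^ m := by
      rw [adjugate_fin_succ_eq_det_submatrix, Fin.succAbove_last, Fin.succAbove_zero,
        det_toeplitzHessenberg_submatrix_castSucc_succ, mul_one, Fin.val_last, Fin.val_zero,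
        add_zero]
    calc A.det = A.det * x 0 := by rw [hx0, mul_one]
      _ = (adjugate A *ᵥ (A *ᵥ fun i => x i)) 0 := by
        rw [mulVec_mulVec, adjugate_mul, smul_mulVec, one_mulVec]; rfl
      _ = adjugate A 0 (Fin.last m) * -x (m + 1) := by
        rw [toeplitzHessenberg_mulVec f x hx]; exact dotProduct_single _ _ _
      _ = (-1) ^ (m + 1) * x (m + 1) := by rw [hcofactor]; ring

end ToeplitzHessenberg

open Nat in
theorem hypergeomEulerSecond_div_factorial_succ (N : ℕ) (E : ℕ → ℚ) (k : ℕ)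
    (hE : E (2 * (k + 1)) = -((2 * (k + 1))! : ℚ) * (2 * N + 1)! *
      ∑ i ∈ range (k + 1), E (2 * i) / ((2 * N + 2 * (k + 1) - 2 * i + 1)! * (2 * i)!)) :
    E (2 * (k + 1)) / (2 * (k + 1))! =
      -∑ i ∈ range (k + 1),
        ((2 * N + 1)! / (2 * N + 2 * (k - i) + 3)! : ℚ) * (E (2 * i) / (2 * i)!) := by
  rw [hE, neg_mul, neg_mul, neg_div, mul_assoc, mul_div_cancel_left₀ _ (by positivity), mul_sum]
  congr 1
  refine sum_congr rfl fun i hi => ?_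
  rw [show 2 * N + 2 * (k + 1) - 2 * i + 1 = 2 * N + 2 * (k - i) + 3 by
    have := mem_range.1 hi; omega]
  ring

theorem hypergeomEulerSecond_det_general (N : ℕ) (E : ℕ → ℕ → ℚ)
    (hE0 : ∀ M : ℕ, E M 0 = 1)
    (hErec : ∀ M m : ℕ, 1 ≤ m →
      E M (2 * m) =
        -((2 * m).factorial : ℚ) * ((2 * M + 1).factorial : ℚ) *
          ∑ i ∈ Finset.range m,
            E M (2 * i) /
              (((2 * M + 2 * m - 2 * i + 1).factorial : ℚ) * ((2 * i).factorial : ℚ)))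
    (n : ℕ) :
    E N (2 * n) =
      (-1) ^ n * ((2 * n).factorial : ℚ) *
        Matrix.det (Matrix.of fun i j : Fin n =>
          if (j : ℕ) ≤ (i : ℕ) then
            ((2 * N + 1).factorial : ℚ) / ((2 * N + 2 * ((i : ℕ) - (j : ℕ)) + 3).factorial : ℚ)
          else if (j : ℕ) = (i : ℕ) + 1 then 1 else 0) := by
  have hdet := det_toeplitzHessenberg
    (fun k => ((2 * N + 1).factorial : ℚ) / ((2 * N + 2 * k + 3).factorial : ℚ))
    (fun k => E N (2 * k) / (2 * k).factorial) (by simp [hE0])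
    (fun k => hypergeomEulerSecond_div_factorial_succ N (E N) k (hErec N (k + 1) k.succ_pos)) n
  rw [toeplitzHessenberg] at hdet
  rw [hdet, mul_mul_mul_comm, ← mul_pow, neg_one_mul, neg_neg, one_pow, one_mul,
    mul_div_cancel₀ _ (by positivity)]

theorem hypergeomEulerSecond_det (N : ℕ) (E : ℕ → ℕ → ℚ)
    (hE0 : ∀ M : ℕ, E M 0 = 1)
    (hEodd : ∀ M m : ℕ, E M (2 * m + 1) = 0)
    (hErec : ∀ M m : ℕ, 1 ≤ m →
      E M (2 * m) =
        -((2 * m).factorial : ℚ) * ((2 * M + 1).factorial : ℚ) *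
          ∑ i ∈ Finset.range m,
            E M (2 * i) /
              (((2 * M + 2 * m - 2 * i + 1).factorial : ℚ) * ((2 * i).factorial : ℚ)))
    (n : ℕ) (hn : 1 ≤ n) :
    E N (2 * n) =
      (-1) ^ n * ((2 * n).factorial : ℚ) *
        Matrix.det (Matrix.of fun i j : Fin n =>
          if (j : ℕ) ≤ (i : ℕ) then
            ((2 * N + 1).factorial : ℚ) / ((2 * N + 2 * ((i : ℕ) - (j : ℕ)) + 3).factorial : ℚ)
          else if (j : ℕ) = (i : ℕ) + 1 then 1 else 0) :=
  hypergeomEulerSecond_det_general N E hE0 hErec n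
end
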